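/- For the simple walk, define for each k ≥ 1 the formal power series R_k ∈ ℝ[[x,y]] by R_k = −8·((1−x)²(1−y)²)⁻¹ · Σ_{l=0}^{k−1} ω(x)^{k−1−l}·(−ω(y))^{l}, where ω(t) = −2t·(1−t)⁻² ∈ ℝ[[t]]; equivalently K(x,y)·R_k = ω(x)^k − (−ω(y))^k, where K(x,y) = (x + y + x²y + xy² − 4xy)/4 is the kernel of the simple walk. Let h_k : ℤ² → ℝ be given by h_k(i,j) = (coefficient of x^i y^j in R_k) for i,j ≥ 0 and 0 otherwise. Then: (1) each h_k is discrete harmonic for the simple walk; (2) for each fixed (i,j), h_k(i,j) = 0 for all k > i + j + 1; and (3) every discrete harmonic function h for the simple walk (with Dirichlet boundary conditions) can be written as h(i,j) = Σ_{k≥1} a_k h_k(i,j) for all (i,j), for a uniquely determined real sequence (a_k)_{k≥1}. -/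

import Mathlib

/-- The discrete Laplacian of the simple walk (steps `(±1,0)`, `(0,±1)`, weight `1/4` each),
defined to be `0` outside the quarter plane. -/
noncomputable def swLap (h : ℤ → ℤ → ℝ) : ℤ → ℤ → ℝ :=
  fun i j =>
    if 0 ≤ i ∧ 0 ≤ j then
      (h (i + 1) j + h (i - 1) j + h i (j + 1) + h i (j - 1)) / 4 - h i j
    else 0

/-- The variable `x` in `ℝ[[x,y]]`. -/
noncomputable def Xps : MvPowerSeries (Fin 2) ℝ := MvPowerSeries.X 0

/-- The variable `y` in `ℝ[[x,y]]`. -/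
noncomputable def Yps : MvPowerSeries (Fin 2) ℝ := MvPowerSeries.X 1

/-- `ω(x) = −2x·(1−x)⁻²` as a power series in `x`. -/
noncomputable def omegaX : MvPowerSeries (Fin 2) ℝ :=
  (MvPowerSeries.C (σ := Fin 2) (R := ℝ)) (-2) * Xps * ((1 - Xps) ^ 2)⁻¹

/-- `ω(y) = −2y·(1−y)⁻²` as a power series in `y`. -/
noncomputable def omegaY : MvPowerSeries (Fin 2) ℝ :=
  (MvPowerSeries.C (σ := Fin 2) (R := ℝ)) (-2) * Yps * ((1 - Yps) ^ 2)⁻¹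

/-- The kernel of the simple walk, `K(x,y) = (x + y + x²y + xy² − 4xy)/4`. -/
noncomputable def swKernel : MvPowerSeries (Fin 2) ℝ :=
  (MvPowerSeries.C (σ := Fin 2) (R := ℝ)) (1 / 4) *
    (Xps + Yps + Xps ^ 2 * Yps + Xps * Yps ^ 2 - 4 * (Xps * Yps))

/-- `R_k = −8·((1−x)²(1−y)²)⁻¹ · Σ_{l=0}^{k−1} ω(x)^{k−1−l}·(−ω(y))^l ∈ ℝ[[x,y]]`. -/
noncomputable def Rser (k : ℕ) : MvPowerSeries (Fin 2) ℝ :=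
  (MvPowerSeries.C (σ := Fin 2) (R := ℝ)) (-8) * ((1 - Xps) ^ 2 * (1 - Yps) ^ 2)⁻¹ *
    ∑ l ∈ Finset.range k, omegaX ^ (k - 1 - l) * (-omegaY) ^ l

/-- `h_k(i,j)` is the coefficient of `x^i y^j` in `R_k` for `i, j ≥ 0`, and `0` otherwise. -/
noncomputable def hser (k : ℕ) : ℤ → ℤ → ℝ :=
  fun i j =>
    if 0 ≤ i ∧ 0 ≤ j then
      (MvPowerSeries.coeff (R := ℝ)
        (Finsupp.single (0 : Fin 2) i.toNat + Finsupp.single (1 : Fin 2) j.toNat)) (Rser k)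
    else 0

/-!
Multiplication by `K(x,y) = xy·((x + x⁻¹ + y + y⁻¹)/4 − 1)` shifts and averages coefficients,
so the coefficient of `x^(i+1) y^(j+1)` in `K·R_k` is `(Δh_k)(i,j)`. Since
`K·(−8)((1−x)²(1−y)²)⁻¹ = ω(x) + ω(y)`, the geometric sum gives `K·R_k = ω(x)^k − (−ω(y))^k`,
which has no mixed monomials; hence `h_k` is harmonic. Every summand of `R_k` is a monomial of
total degree `k − 1` times a series, which gives the vanishing, and `h_(n+1)(n,0) = −8(−2)^n ≠ 0`.

A harmonic function with Dirichlet boundary conditions is determined by its first row `h(·,0)`.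
The first row of `Σ a_k h_(k+1)` is a lower-triangular system in `(a_k)` with nonzero diagonal,
so exactly one sequence matches `h(·,0)`, and then the two harmonic functions agree everywhere.
-/

open MvPowerSeries Finset

namespace MvPowerSeries

variable {σ R : Type*} [CommRing R]

def freeOf (s : σ) : Subring (MvPowerSeries σ R) where
  carrier := {f | ∀ m : σ →₀ ℕ, m s ≠ 0 → coeff m f = 0}
  zero_mem' _ _ := map_zero _
  one_mem' m hm := by
    classical
    rw [coeff_one, if_neg (by rintro rfl; exact hm rfl)]
  add_mem' hf hg m hm := by rw [map_add, hf m hm, hg m hm, add_zero]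
  neg_mem' hf m hm := by rw [map_neg, hf m hm, neg_zero]
  mul_mem' {f g} hf hg m hm := by
    classical
    rw [coeff_mul]
    refine Finset.sum_eq_zero fun p hp => ?_
    have hsum : p.1 s + p.2 s = m s := by rw [← Finsupp.add_apply, mem_antidiagonal.mp hp]
    rcases Nat.eq_zero_or_pos (p.1 s) with h | h
    · rw [hg p.2 (by omega), mul_zero]
    · rw [hf p.1 (by omega), zero_mul]

variable {s : σ}

lemma C_mem_freeOf (a : R) : C a ∈ freeOf (R := R) s := by
  classical
  intro m hm
  rw [coeff_C, if_neg (by rintro rfl; exact hm rfl)]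

lemma X_mem_freeOf {t : σ} (h : t ≠ s) : X t ∈ freeOf (R := R) s := by
  classical
  intro m hm
  rw [coeff_X, if_neg (by rintro rfl; simp [h] at hm)]

lemma inv_mem_freeOf {k : Type*} [Field k] {f : MvPowerSeries σ k} (hf : f ∈ freeOf s) :
    f⁻¹ ∈ freeOf s := by
  classical
  intro m hm
  induction m using WellFoundedLT.induction with
  | _ m ih =>
  rw [coeff_inv, if_neg (by rintro rfl; exact hm rfl), Finset.sum_eq_zero, mul_zero]
  intro p hp
  have hsum : p.1 s + p.2 s = m s := by rw [← Finsupp.add_apply, mem_antidiagonal.mp hp]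
  split_ifs with hlt
  · rcases Nat.eq_zero_or_pos (p.2 s) with h | h
    · rw [hf p.1 (by omega), zero_mul]
    · rw [ih p.2 hlt (by omega), mul_zero]
  · rfl

lemma one_sub_X_sq_mul_inv {k : Type*} [Field k] (s : σ) :
    (1 - X s : MvPowerSeries σ k) ^ 2 * ((1 - X s) ^ 2)⁻¹ = 1 :=
  MvPowerSeries.mul_inv_cancel _ (by simp)

end MvPowerSeries

noncomputable def lowerTriangularSolve {K : Type*} [Field K] (T : ℕ → ℕ → K) (v : ℕ → K) :
    ℕ → K
  | n => (v n - ∑ k ∈ (range n).attach, lowerTriangularSolve T v k * T n k) / T n n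
  decreasing_by exact mem_range.mp k.2

lemma existsUnique_lowerTriangular_solution {K : Type*} [Field K] (T : ℕ → ℕ → K)
    (hT : ∀ n, T n n ≠ 0) (v : ℕ → K) :
    ∃! a : ℕ → K, ∀ n, ∑ k ∈ range (n + 1), a k * T n k = v n := by
  refine ⟨lowerTriangularSolve T v, fun n => ?_, fun b hb => funext fun n => ?_⟩
  · rw [sum_range_succ, lowerTriangularSolve,
      sum_attach (range n) fun k => lowerTriangularSolve T v k * T n k, div_mul_cancel₀ _ (hT n)]
    ring
  · induction n using Nat.strong_induction_on with
    | _ n ih =>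
    have hn := hb n
    rw [sum_range_succ, sum_congr rfl fun k hk => by rw [ih k (mem_range.mp hk)]] at hn
    rw [lowerTriangularSolve, sum_attach (range n) fun k => lowerTriangularSolve T v k * T n k,
      eq_div_iff (hT n)]
    linear_combination hn

noncomputable def quadrantCoeff (f : MvPowerSeries (Fin 2) ℝ) (i j : ℤ) : ℝ :=
  if 0 ≤ i ∧ 0 ≤ j then coeff (Finsupp.single 0 i.toNat + Finsupp.single 1 j.toNat) f else 0

lemma hser_eq_quadrantCoeff (k : ℕ) : hser k = quadrantCoeff (Rser k) := rfl

lemma quadrantCoeff_of_neg {f : MvPowerSeries (Fin 2) ℝ} {i j : ℤ} (h : i < 0 ∨ j < 0) :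
    quadrantCoeff f i j = 0 := by
  rw [quadrantCoeff, if_neg (by omega)]

lemma quadrantCoeff_zero_zero (f : MvPowerSeries (Fin 2) ℝ) :
    quadrantCoeff f 0 0 = constantCoeff f := by
  simp [quadrantCoeff]

lemma quadrantCoeff_add (f g : MvPowerSeries (Fin 2) ℝ) (i j : ℤ) :
    quadrantCoeff (f + g) i j = quadrantCoeff f i j + quadrantCoeff g i j := by
  unfold quadrantCoeff; split_ifs <;> simp

lemma quadrantCoeff_sub (f g : MvPowerSeries (Fin 2) ℝ) (i j : ℤ) :
    quadrantCoeff (f - g) i j = quadrantCoeff f i j - quadrantCoeff g i j := by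
  unfold quadrantCoeff; split_ifs <;> simp

lemma quadrantCoeff_sum {ι : Type*} (s : Finset ι) (f : ι → MvPowerSeries (Fin 2) ℝ) (i j : ℤ) :
    quadrantCoeff (∑ l ∈ s, f l) i j = ∑ l ∈ s, quadrantCoeff (f l) i j := by
  unfold quadrantCoeff; split_ifs <;> simp

lemma quadrantCoeff_C_mul (a : ℝ) (f : MvPowerSeries (Fin 2) ℝ) (i j : ℤ) :
    quadrantCoeff (C a * f) i j = a * quadrantCoeff f i j := by
  unfold quadrantCoeff; split_ifs <;> simp

lemma quadrantCoeff_X_pow_mul_Y_pow_mul (a b : ℕ) (f : MvPowerSeries (Fin 2) ℝ) (i j : ℤ) :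
    quadrantCoeff (Xps ^ a * Yps ^ b * f) i j = quadrantCoeff f (i - a) (j - b) := by
  have hmono : Xps ^ a * Yps ^ b = monomial (Finsupp.single 0 a + Finsupp.single 1 b) (1 : ℝ) := by
    rw [Xps, Yps, X_pow_eq, X_pow_eq, monomial_mul_monomial, one_mul]
  unfold quadrantCoeff
  rw [hmono, coeff_monomial_mul, one_mul]
  by_cases hij : 0 ≤ i - a ∧ 0 ≤ j - b
  · rw [if_pos (by omega), if_pos hij, if_pos]
    · congr 2
      ext t
      fin_cases t <;> simp
    · intro t
      fin_cases t <;> simp <;> omega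
  · rw [if_neg hij]
    split_ifs with h0 hle
    · have h0' := hle 0
      have h1' := hle 1
      simp at h0' h1'
      omega
    all_goals rfl

lemma swKernel_mul_eq_omegaX_add_omegaY :
    swKernel * (C (-8) * ((1 - Xps) ^ 2 * (1 - Yps) ^ 2)⁻¹) = omegaX + omegaY := by
  have hA : (1 - Xps) ^ 2 * ((1 - Xps) ^ 2)⁻¹ = 1 := one_sub_X_sq_mul_inv 0
  have hB : (1 - Yps) ^ 2 * ((1 - Yps) ^ 2)⁻¹ = 1 := one_sub_X_sq_mul_inv 1
  have hC : (C (1 / 4) * C (-8) : MvPowerSeries (Fin 2) ℝ) = C (-2) := by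
    rw [← map_mul]; norm_num
  rw [MvPowerSeries.mul_inv_rev, swKernel, omegaX, omegaY]
  linear_combination (Xps + Yps + Xps ^ 2 * Yps + Xps * Yps ^ 2 - 4 * (Xps * Yps)) *
      ((1 - Yps) ^ 2)⁻¹ * ((1 - Xps) ^ 2)⁻¹ * hC
    + C (-2) * Xps * ((1 - Xps) ^ 2)⁻¹ * hB + C (-2) * Yps * ((1 - Yps) ^ 2)⁻¹ * hA

lemma swKernel_mul_Rser (k : ℕ) : swKernel * Rser k = omegaX ^ k - (-omegaY) ^ k := by
  have hsum : ∑ l ∈ range k, omegaX ^ (k - 1 - l) * (-omegaY) ^ l =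
      ∑ l ∈ range k, (-omegaY) ^ l * omegaX ^ (k - 1 - l) :=
    sum_congr rfl fun _ _ => mul_comm _ _
  rw [Rser, ← mul_assoc, swKernel_mul_eq_omegaX_add_omegaY, hsum, ← sub_neg_eq_add,
    (Commute.all _ _).mul_neg_geom_sum₂]

lemma quadrantCoeff_swKernel_mul (f : MvPowerSeries (Fin 2) ℝ) {i j : ℤ} (hi : 0 ≤ i)
    (hj : 0 ≤ j) : quadrantCoeff (swKernel * f) (i + 1) (j + 1) = swLap (quadrantCoeff f) i j := by
  have h4 : (C (1 / 4) * 4 : MvPowerSeries (Fin 2) ℝ) = C 1 := by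
    rw [← map_ofNat C 4, ← map_mul]; norm_num
  have hexp : swKernel * f = C (1 / 4) * (Xps ^ 1 * Yps ^ 0 * f + Xps ^ 0 * Yps ^ 1 * f
      + Xps ^ 2 * Yps ^ 1 * f + Xps ^ 1 * Yps ^ 2 * f) - C 1 * (Xps ^ 1 * Yps ^ 1 * f) := by
    rw [swKernel]
    linear_combination (-(Xps * Yps * f)) * h4
  simp only [hexp, quadrantCoeff_sub, quadrantCoeff_add, quadrantCoeff_C_mul,
    quadrantCoeff_X_pow_mul_Y_pow_mul, swLap, if_pos (And.intro hi hj)]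
  ring_nf

lemma quadrantCoeff_eq_zero_of_mem_freeOf_zero {f : MvPowerSeries (Fin 2) ℝ} (hf : f ∈ freeOf 0)
    {i j : ℤ} (hi : 0 < i) : quadrantCoeff f i j = 0 := by
  unfold quadrantCoeff
  split_ifs
  · exact hf _ (by simp; omega)
  · rfl

lemma quadrantCoeff_eq_zero_of_mem_freeOf_one {f : MvPowerSeries (Fin 2) ℝ} (hf : f ∈ freeOf 1)
    {i j : ℤ} (hj : 0 < j) : quadrantCoeff f i j = 0 := by
  unfold quadrantCoeff
  split_ifs
  · exact hf _ (by simp; omega)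
  · rfl

lemma omegaX_mem_freeOf : omegaX ∈ freeOf 1 :=
  mul_mem (mul_mem (C_mem_freeOf _) (X_mem_freeOf (by decide)))
    (inv_mem_freeOf (pow_mem (sub_mem (one_mem _) (X_mem_freeOf (by decide))) 2))

lemma omegaY_mem_freeOf : omegaY ∈ freeOf 0 :=
  mul_mem (mul_mem (C_mem_freeOf _) (X_mem_freeOf (by decide)))
    (inv_mem_freeOf (pow_mem (sub_mem (one_mem _) (X_mem_freeOf (by decide))) 2))

lemma swLap_hser (k : ℕ) : swLap (hser k) = 0 := by
  funext i j
  by_cases hij : 0 ≤ i ∧ 0 ≤ j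
  · rw [hser_eq_quadrantCoeff, ← quadrantCoeff_swKernel_mul _ hij.1 hij.2, swKernel_mul_Rser,
      quadrantCoeff_sub,
      quadrantCoeff_eq_zero_of_mem_freeOf_one (pow_mem omegaX_mem_freeOf k) (by omega),
      quadrantCoeff_eq_zero_of_mem_freeOf_zero (pow_mem (neg_mem omegaY_mem_freeOf) k) (by omega),
      sub_zero, Pi.zero_apply, Pi.zero_apply]
  · simp [swLap, hij]

lemma Rser_eq_sum (k : ℕ) : Rser k = ∑ l ∈ range k, Xps ^ (k - 1 - l) * Yps ^ l *
    (C (-8) * ((1 - Xps) ^ 2 * (1 - Yps) ^ 2)⁻¹ * (C (-2) * ((1 - Xps) ^ 2)⁻¹) ^ (k - 1 - l) *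
      (C 2 * ((1 - Yps) ^ 2)⁻¹) ^ l) := by
  rw [Rser, mul_sum]
  refine sum_congr rfl fun l _ => ?_
  rw [omegaX, omegaY, map_neg C 2]
  ring

lemma hser_eq_zero_of_lt {k : ℕ} {i j : ℤ} (h : i + j + 1 < k) : hser k i j = 0 := by
  rw [hser_eq_quadrantCoeff, Rser_eq_sum, quadrantCoeff_sum]
  refine sum_eq_zero fun l hl => ?_
  rw [quadrantCoeff_X_pow_mul_Y_pow_mul]
  exact quadrantCoeff_of_neg (by have := mem_range.mp hl; omega)

lemma hser_succ_self_zero (n : ℕ) : hser (n + 1) n 0 = -8 * (-2) ^ n := by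
  rw [hser_eq_quadrantCoeff, Rser_eq_sum, quadrantCoeff_sum,
    sum_eq_single_of_mem 0 (by simp), quadrantCoeff_X_pow_mul_Y_pow_mul]
  · simp [quadrantCoeff_zero_zero, Xps, Yps]
  · intro l _ hl
    rw [quadrantCoeff_X_pow_mul_Y_pow_mul]
    exact quadrantCoeff_of_neg (by omega)

def VanishesOffQuadrant (h : ℤ → ℤ → ℝ) : Prop :=
  ∀ i j : ℤ, i < 0 ∨ j < 0 → h i j = 0

lemma swLap_eq_zero_iff {h : ℤ → ℤ → ℝ} : swLap h = 0 ↔ ∀ i j : ℤ, 0 ≤ i → 0 ≤ j →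
    h i (j + 1) = 4 * h i j - h (i + 1) j - h (i - 1) j - h i (j - 1) := by
  simp only [funext_iff, swLap, Pi.zero_apply]
  refine forall₂_congr fun i j => ?_
  split_ifs with hij
  · simp only [hij, forall_const]
    constructor <;> intro h <;> linarith
  · tauto

/-- Harmonicity at `(i, j)` solves for the value at `(i, j + 1)`, so the rows agree one by one. -/
lemma eq_of_swLap_eq_zero_of_row_eq {f g : ℤ → ℤ → ℝ} (hf : VanishesOffQuadrant f)
    (hg : VanishesOffQuadrant g) (hf' : swLap f = 0) (hg' : swLap g = 0)
    (hrow : ∀ n : ℕ, f n 0 = g n 0) : f = g := by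
  rw [swLap_eq_zero_iff] at hf' hg'
  have rows_eq : ∀ n : ℕ, ∀ i : ℤ, f i n = g i n ∧ f i (n - 1) = g i (n - 1) := by
    intro n
    induction n with
    | zero =>
      intro i
      refine ⟨?_, by rw [hf _ _ (by omega), hg _ _ (by omega)]⟩
      rcases lt_or_ge i 0 with hi | hi
      · rw [hf _ _ (Or.inl hi), hg _ _ (Or.inl hi)]
      · simpa [hi] using hrow i.toNat
    | succ n ih =>
      intro i
      push_cast
      refine ⟨?_, by simpa using (ih i).1⟩
      rcases lt_or_ge i 0 with hi | hi
      · rw [hf _ _ (Or.inl hi), hg _ _ (Or.inl hi)]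
      · rw [hf' i n hi (by omega), hg' i n hi (by omega), (ih i).1, (ih i).2, (ih (i + 1)).1,
          (ih (i - 1)).1]
  funext i j
  rcases lt_or_ge j 0 with hj | hj
  · rw [hf _ _ (Or.inr hj), hg _ _ (Or.inr hj)]
  · simpa [hj] using (rows_eq j.toNat i).1

noncomputable def swLapLinearMap : (ℤ → ℤ → ℝ) →ₗ[ℝ] (ℤ → ℤ → ℝ) where
  toFun := swLap
  map_add' f g := by
    funext i j
    simp only [swLap, Pi.add_apply]
    split_ifs <;> ring
  map_smul' c f := by
    funext i j
    simp only [swLap, Pi.smul_apply, smul_eq_mul, RingHom.id_apply]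
    split_ifs <;> ring

lemma swLapLinearMap_apply (f : ℤ → ℤ → ℝ) : swLapLinearMap f = swLap f := rfl

lemma swLap_congr {f g : ℤ → ℤ → ℝ} {i j : ℤ}
    (hfg : ∀ p q : ℤ, p + q ≤ i + j + 1 → f p q = g p q) : swLap f i j = swLap g i j := by
  simp only [swLap]
  rw [hfg (i + 1) j (by omega), hfg (i - 1) j (by omega), hfg i (j + 1) (by omega),
    hfg i (j - 1) (by omega), hfg i j (by omega)]

noncomputable def hserSeries (a : ℕ → ℝ) (i j : ℤ) : ℝ := ∑' k : ℕ, a k * hser (k + 1) i j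

lemma hserSeries_eq_sum (a : ℕ → ℝ) {N : ℕ} {i j : ℤ} (h : i + j < N) :
    hserSeries a i j = ∑ k ∈ range N, a k * hser (k + 1) i j :=
  tsum_eq_sum fun k hk => by
    rw [hser_eq_zero_of_lt (by have := mem_range.not.mp hk; omega), mul_zero]

lemma hserSeries_vanishesOffQuadrant (a : ℕ → ℝ) : VanishesOffQuadrant (hserSeries a) := by
  intro i j hij
  simp [hserSeries, hser_eq_quadrantCoeff, quadrantCoeff_of_neg hij]

lemma swLap_hserSeries (a : ℕ → ℝ) : swLap (hserSeries a) = 0 := by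
  funext i j
  obtain ⟨N, hN⟩ : ∃ N : ℕ, i + j + 1 < N := ⟨(i + j).toNat + 2, by omega⟩
  calc swLap (hserSeries a) i j = swLap (∑ k ∈ range N, a k • hser (k + 1)) i j :=
        swLap_congr fun p q hpq => by simpa using hserSeries_eq_sum a (by omega : p + q < N)
    _ = 0 := by
      rw [← swLapLinearMap_apply, map_sum]
      simp [swLapLinearMap_apply, swLap_hser]

/-- For the simple walk: (0) `K·R_k = ω(x)^k − (−ω(y))^k`; (1) each `h_k` is discrete
harmonic; (2) `h_k(i,j) = 0` whenever `k > i + j + 1`; and (3) every discrete harmonic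
function with Dirichlet boundary conditions is `Σ_{k≥1} a_k h_k` for a uniquely determined
real sequence `(a_k)_{k≥1}`. -/
theorem simple_walk_all_harmonic_functions :
    (∀ k : ℕ, 1 ≤ k → swKernel * Rser k = omegaX ^ k - (-omegaY) ^ k) ∧
    (∀ k : ℕ, 1 ≤ k → swLap (hser k) = 0) ∧
    (∀ k : ℕ, ∀ i j : ℤ, 0 ≤ i → 0 ≤ j → i + j + 1 < (k : ℤ) → hser k i j = 0) ∧
    (∀ h : ℤ → ℤ → ℝ, (∀ i j : ℤ, i < 0 ∨ j < 0 → h i j = 0) → swLap h = 0 →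
      ∃! a : ℕ → ℝ, ∀ i j : ℤ, h i j = ∑' k : ℕ, a k * hser (k + 1) i j) := by
  refine ⟨fun k _ => swKernel_mul_Rser k, fun k _ => swLap_hser k,
    fun k i j _ _ h => hser_eq_zero_of_lt h, fun h hbc hlap => ?_⟩
  have hrow (a : ℕ → ℝ) (n : ℕ) :
      hserSeries a n 0 = ∑ k ∈ range (n + 1), a k * hser (k + 1) n 0 :=
    hserSeries_eq_sum a (by omega)
  obtain ⟨a, ha, huniq⟩ := existsUnique_lowerTriangular_solution (fun n k => hser (k + 1) n 0)
    (fun n => by simp [hser_succ_self_zero]) (fun n => h n 0)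
  refine ⟨a, fun i j => ?_, fun b hb => huniq b fun n => ?_⟩
  · have := eq_of_swLap_eq_zero_of_row_eq hbc (hserSeries_vanishesOffQuadrant a) hlap
      (swLap_hserSeries a) fun n => by rw [hrow, ha]
    exact congrFun (congrFun this i) j
  · exact (hrow b n).symm.trans (hb n 0).symm
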